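/- arXiv:2302.07031 — 2 statements merged into one kernel-verified Lean document; each statement's English description precedes it below -/
import Mathlib

section
/- Uniqueness part of Theorem 1: let u ∈ ℝ³ with u ≠ 0. If f₁, f₂ ∈ ℝ³ satisfy the static load balance equations f₁ + f₂ = m_L·g·e₃ and b₁·(u × f₁) − b₂·(u × f₂) = 0, then there exists a unique t ∈ ℝ such that f₁ = (b₂·m_L·g/L)·e₃ + t·u and f₂ = (b₁·m_L·g/L)·e₃ − t·u; i.e., the solutions of the load wrench equations are exactly the one-parameter family of Theorem 1. -/
open scoped RealInnerProductSpace

/-- Cross product on `EuclideanSpace ℝ (Fin 3)`. -/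
noncomputable def cross3 (a b : EuclideanSpace ℝ (Fin 3)) : EuclideanSpace ℝ (Fin 3) :=
  WithLp.toLp 2 ![a 1 * b 2 - a 2 * b 1, a 2 * b 0 - a 0 * b 2, a 0 * b 1 - a 1 * b 0]

/-- The vertical unit vector `e₃`. -/
noncomputable def e3 : EuclideanSpace ℝ (Fin 3) := WithLp.toLp 2 ![(0 : ℝ), 0, 1]

/-!
Write `f₁ = c e₃ + v` with `c = b₂ m_L g / L`; force balance then gives `f₂ = d e₃ - v` with
`d = b₁ m_L g / L`. Since `b₁ c = b₂ d`, the vertical parts exert no net moment, and the torque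
equation collapses to `L (u × v) = 0`. As `u ≠ 0`, this makes `v` a multiple `t u`.
-/

open Matrix

theorem exists_smul_eq_of_cross_eq_zero {F : Type*} [Field F] {u v : Fin 3 → F} (hu : u ≠ 0)
    (h : u ⨯₃ v = 0) : ∃ t : F, t • u = v := by
  by_contra! hv
  exact crossProduct_ne_zero_iff_linearIndependent.mpr
    ((LinearIndependent.pair_iff' hu).mpr hv) h

theorem cross3_eq_toLp_cross (a b : EuclideanSpace ℝ (Fin 3)) :
    cross3 a b = WithLp.toLp 2 (a.ofLp ⨯₃ b.ofLp) := rfl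

theorem cross3_add_right (a b c : EuclideanSpace ℝ (Fin 3)) :
    cross3 a (b + c) = cross3 a b + cross3 a c := by
  simp only [cross3_eq_toLp_cross, WithLp.ofLp_add, map_add, WithLp.toLp_add]

theorem cross3_sub_right (a b c : EuclideanSpace ℝ (Fin 3)) :
    cross3 a (b - c) = cross3 a b - cross3 a c := by
  simp only [cross3_eq_toLp_cross, WithLp.ofLp_sub, map_sub, WithLp.toLp_sub]

theorem cross3_smul_right (a : EuclideanSpace ℝ (Fin 3)) (r : ℝ) (b : EuclideanSpace ℝ (Fin 3)) :
    cross3 a (r • b) = r • cross3 a b := by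
  simp only [cross3_eq_toLp_cross, WithLp.ofLp_smul, map_smul, WithLp.toLp_smul]

theorem exists_smul_eq_of_cross3_eq_zero {u v : EuclideanSpace ℝ (Fin 3)} (hu : u ≠ 0)
    (h : cross3 u v = 0) : ∃ t : ℝ, t • u = v := by
  obtain ⟨t, ht⟩ := exists_smul_eq_of_cross_eq_zero (u := u.ofLp) (v := v.ofLp)
    (by simpa using hu) (by simpa [cross3_eq_toLp_cross] using h)
  exact ⟨t, by simpa using congrArg (WithLp.toLp 2) ht⟩

theorem smul_cross3_sub_smul_cross3_of_mul_eq_mul {b₁ b₂ c d : ℝ} (hbal : b₁ * c = b₂ * d)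
    (u e v : EuclideanSpace ℝ (Fin 3)) :
    b₁ • cross3 u (c • e + v) - b₂ • cross3 u (d • e - v) = (b₁ + b₂) • cross3 u v := by
  simp only [cross3_add_right, cross3_sub_right, cross3_smul_right, smul_add, smul_sub, smul_smul,
    hbal]
  module

theorem equilibrium_cable_forces_unique_general
    (mL g b₁ b₂ L : ℝ) (hb₁ : 0 < b₁) (hb₂ : 0 < b₂)
    (hL : L = b₁ + b₂)
    (u : EuclideanSpace ℝ (Fin 3)) (hu : u ≠ 0)
    (f₁ f₂ : EuclideanSpace ℝ (Fin 3))
    (hforce : f₁ + f₂ = (mL * g) • e3)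
    (htorque : b₁ • cross3 u f₁ - b₂ • cross3 u f₂ = 0) :
    ∃! t : ℝ, f₁ = (b₂ * mL * g / L) • e3 + t • u ∧
              f₂ = (b₁ * mL * g / L) • e3 - t • u := by
  subst hL
  have hL0 : b₁ + b₂ ≠ 0 := by positivity
  set c := b₂ * mL * g / (b₁ + b₂)
  set d := b₁ * mL * g / (b₁ + b₂)
  have hcd : c + d = mL * g := by simp only [c, d]; field_simp; ring
  have hbal : b₁ * c = b₂ * d := by ring
  obtain ⟨v, rfl⟩ : ∃ v, f₁ = c • e3 + v := ⟨f₁ - c • e3, by abel⟩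
  obtain rfl : f₂ = d • e3 - v := by
    rw [eq_sub_of_add_eq' hforce, ← hcd, add_smul]; abel
  have hv : cross3 u v = 0 := by
    rw [smul_cross3_sub_smul_cross3_of_mul_eq_mul hbal] at htorque
    exact (smul_eq_zero.mp htorque).resolve_left hL0
  obtain ⟨t, rfl⟩ := exists_smul_eq_of_cross3_eq_zero hu hv
  refine ⟨t, ⟨rfl, rfl⟩, fun s ⟨hs, _⟩ => ?_⟩
  exact smul_left_injective ℝ hu (add_left_cancel hs).symm

/-- uniqueness part of Theorem 1: if the cable forces `f₁, f₂` satisfy the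
static load balance equations, then there is a unique internal-force intensity `t` such
that `f₁ = (b₂ m g / L) e₃ + t u` and `f₂ = (b₁ m g / L) e₃ - t u`. -/
theorem equilibrium_cable_forces_unique
    (mL g b₁ b₂ L : ℝ) (hm : 0 < mL) (hg : 0 < g) (hb₁ : 0 < b₁) (hb₂ : 0 < b₂)
    (hL : L = b₁ + b₂)
    (u : EuclideanSpace ℝ (Fin 3)) (hu : u ≠ 0)
    (f₁ f₂ : EuclideanSpace ℝ (Fin 3))
    (hforce : f₁ + f₂ = (mL * g) • e3)
    (htorque : b₁ • cross3 u f₁ - b₂ • cross3 u f₂ = 0) :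
    ∃! t : ℝ, f₁ = (b₂ * mL * g / L) • e3 + t • u ∧
              f₂ = (b₁ * mL * g / L) • e3 - t • u :=
  equilibrium_cable_forces_unique_general mL g b₁ b₂ L hb₁ hb₂ hL u hu f₁ f₂ hforce htorque
end

section
/- Global minimum of the cable elastic-energy term of the Lyapunov function (Theorem 3, proof): let k > 0, l₀ ≥ 0 and f ∈ ℝ³ with f ≠ 0, and define h : ℝ³ → ℝ by h(x) = (k/2)·(‖x‖ − l₀)² − ⟨x, f⟩. Then h(x) ≥ −‖f‖²/(2k) − l₀·‖f‖ for all x ∈ ℝ³, with equality if and only if x = (l₀ + ‖f‖/k)·f/‖f‖. That is, h attains a strict global minimum exactly at the equilibrium cable vector of Theorem 1. -/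
open scoped RealInnerProductSpace

/-
Completing the square in `‖x‖` gives
`h x + ‖f‖²/(2k) + l₀‖f‖ = (k/2)(‖x‖ - (l₀ + ‖f‖/k))² + (‖x‖‖f‖ - ⟪x, f⟫)`.
Both terms are nonnegative, the second by Cauchy–Schwarz, so the bound holds, and equality forces
`‖x‖ = l₀ + ‖f‖/k` together with equality in Cauchy–Schwarz, i.e. `x` is that nonnegative multiple
of the unit vector `f/‖f‖`.
-/

section CableEnergy

variable {E : Type*} [NormedAddCommGroup E] [InnerProductSpace ℝ E]

noncomputable def cableEnergy (k l₀ : ℝ) (f x : E) : ℝ := (k / 2) * (‖x‖ - l₀) ^ 2 - ⟪x, f⟫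

theorem cableEnergy_sub_eq {k : ℝ} (hk : k ≠ 0) (l₀ : ℝ) (f x : E) :
    cableEnergy k l₀ f x - (-‖f‖ ^ 2 / (2 * k) - l₀ * ‖f‖) =
      (k / 2) * (‖x‖ - (l₀ + ‖f‖ / k)) ^ 2 + (‖x‖ * ‖f‖ - ⟪x, f⟫) := by
  unfold cableEnergy
  field_simp
  ring

theorem eq_smul_inv_norm_smul_iff {f : E} (hf : f ≠ 0) {c : ℝ} (hc : 0 ≤ c) (x : E) :
    x = c • ‖f‖⁻¹ • f ↔ ‖x‖ = c ∧ ⟪x, f⟫ = ‖x‖ * ‖f‖ := by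
  have hf' : ‖f‖ ≠ 0 := norm_ne_zero_iff.mpr hf
  constructor
  · rintro rfl
    have hnorm : ‖c • ‖f‖⁻¹ • f‖ = c := by
      rw [norm_smul, norm_smul, norm_inv, norm_norm, Real.norm_of_nonneg hc,
        inv_mul_cancel₀ hf', mul_one]
    refine ⟨hnorm, ?_⟩
    rw [hnorm, real_inner_smul_left, real_inner_smul_left, real_inner_self_eq_norm_sq]
    field_simp
  · rintro ⟨hnorm, hinner⟩
    rw [inner_eq_norm_mul_iff_real, hnorm] at hinner
    rw [smul_smul, mul_comm, ← smul_smul, ← hinner, smul_smul, inv_mul_cancel₀ hf', one_smul]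

variable {k : ℝ} (l₀ : ℝ) (f : E)

theorem cableEnergy_ge (hk : 0 < k) (x : E) :
    -‖f‖ ^ 2 / (2 * k) - l₀ * ‖f‖ ≤ cableEnergy k l₀ f x := by
  have hsq : 0 ≤ (k / 2) * (‖x‖ - (l₀ + ‖f‖ / k)) ^ 2 := by positivity
  have hCS : ⟪x, f⟫ ≤ ‖x‖ * ‖f‖ := real_inner_le_norm x f
  linarith [cableEnergy_sub_eq hk.ne' l₀ f x]

theorem cableEnergy_eq_min_iff (hk : 0 < k) (hl₀ : 0 ≤ l₀) (hf : f ≠ 0) (x : E) :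
    cableEnergy k l₀ f x = -‖f‖ ^ 2 / (2 * k) - l₀ * ‖f‖ ↔
      x = (l₀ + ‖f‖ / k) • ‖f‖⁻¹ • f := by
  have hsq : 0 ≤ (k / 2) * (‖x‖ - (l₀ + ‖f‖ / k)) ^ 2 := by positivity
  have hCS : 0 ≤ ‖x‖ * ‖f‖ - ⟪x, f⟫ := sub_nonneg.mpr (real_inner_le_norm x f)
  rw [eq_smul_inv_norm_smul_iff hf (by positivity), ← sub_eq_zero, cableEnergy_sub_eq hk.ne',
    add_eq_zero_iff_of_nonneg hsq hCS, mul_eq_zero, pow_eq_zero_iff two_ne_zero, sub_eq_zero,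
    sub_eq_zero, eq_comm (a := ‖x‖ * ‖f‖)]
  simp only [hk.ne', div_eq_zero_iff, two_ne_zero, or_self, false_or]

end CableEnergy

/-- global minimum of the cable elastic-energy term of the Lyapunov
function: `h(x) = (k/2)(‖x‖ − l₀)² − ⟨x, f⟩` satisfies `h(x) ≥ −‖f‖²/(2k) − l₀ ‖f‖`,
with equality iff `x = (l₀ + ‖f‖/k) f/‖f‖`, the equilibrium cable vector of Theorem 1. -/
theorem cable_energy_global_min
    (k l₀ : ℝ) (hk : 0 < k) (hl₀ : 0 ≤ l₀)
    (f : EuclideanSpace ℝ (Fin 3)) (hf : f ≠ 0)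
    (h : EuclideanSpace ℝ (Fin 3) → ℝ)
    (hh : ∀ x, h x = (k / 2) * (‖x‖ - l₀) ^ 2 - ⟪x, f⟫) :
    ∀ x : EuclideanSpace ℝ (Fin 3),
      h x ≥ -‖f‖ ^ 2 / (2 * k) - l₀ * ‖f‖ ∧
      (h x = -‖f‖ ^ 2 / (2 * k) - l₀ * ‖f‖ ↔ x = (l₀ + ‖f‖ / k) • ‖f‖⁻¹ • f) := by
  intro x
  rw [hh]
  exact ⟨cableEnergy_ge l₀ f hk x, cableEnergy_eq_min_iff l₀ f hk hl₀ hf x⟩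
end
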